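/- The real vector space of ad-invariant symmetric bilinear forms on so(3,1) — that is, symmetric bilinear forms B : so(3,1)² → ℝ satisfying B([X,Y],Z) + B(Y,[X,Z]) = 0 for all X, Y, Z ∈ so(3,1) — is two-dimensional, spanned by B₁(A,B) = tr(AB) and B₂(A,B) = Σ_{a,b,c,d} ε^{abcd} (ηA)_{ab} (ηB)_{cd}. -/

import Mathlib

open Matrix

attribute [local instance 100] LieRing.ofAssociativeRing

noncomputable section

/-- The Minkowski metric `η = diag(−1,1,1,1)`. -/
def eta : Matrix (Fin 4) (Fin 4) ℝ := Matrix.diagonal ![-1, 1, 1, 1]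

/-- The real Lie algebra `so(3,1)`: 4×4 real matrices `A` with `Aᵀη + ηA = 0`
(skew-adjoint with respect to `η`), with the matrix commutator as bracket. -/
def so31 : LieSubalgebra ℝ (Matrix (Fin 4) (Fin 4) ℝ) :=
  skewAdjointMatricesLieSubalgebra eta

/-- The totally antisymmetric symbol `ε` with `ε^{0123} = 1` (realized as the
determinant of the corresponding rows of the identity matrix). -/
def eps (a b c d : Fin 4) : ℝ :=
  Matrix.det (Matrix.of fun i j => if ![a, b, c, d] i = j then (1 : ℝ) else 0)

/-- The trilinear form `T₁(A,B,C) = tr(A[B,C])` on `so(3,1)`. -/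
def T1 (A B C : so31) : ℝ :=
  Matrix.trace ((A : Matrix (Fin 4) (Fin 4) ℝ) *
    ((B : Matrix (Fin 4) (Fin 4) ℝ) * (C : Matrix (Fin 4) (Fin 4) ℝ) -
     (C : Matrix (Fin 4) (Fin 4) ℝ) * (B : Matrix (Fin 4) (Fin 4) ℝ)))

/-- The trilinear form
`T₂(A,B,C) = Σ_{a,b,c,d,e,f} ε^{abcd} η^{ef} (ηA)_{ab} (ηB)_{ce} (ηC)_{df}`
on `so(3,1)` (here `η^{ef}` are the entries of `η⁻¹ = η`). -/
def T2 (A B C : so31) : ℝ :=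
  ∑ a, ∑ b, ∑ c, ∑ d, ∑ e, ∑ f,
    eps a b c d * eta e f * (eta * (A : Matrix (Fin 4) (Fin 4) ℝ)) a b *
      (eta * (B : Matrix (Fin 4) (Fin 4) ℝ)) c e *
      (eta * (C : Matrix (Fin 4) (Fin 4) ℝ)) d f

/-- The symmetric bilinear form `B₁(A,B) = tr(AB)` on `so(3,1)`. -/
def B1 (A B : so31) : ℝ :=
  Matrix.trace ((A : Matrix (Fin 4) (Fin 4) ℝ) * (B : Matrix (Fin 4) (Fin 4) ℝ))

/-- The symmetric bilinear form `B₂(A,B) = Σ_{a,b,c,d} ε^{abcd} (ηA)_{ab} (ηB)_{cd}`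
on `so(3,1)`. -/
def B2 (A B : so31) : ℝ :=
  ∑ a, ∑ b, ∑ c, ∑ d,
    eps a b c d * (eta * (A : Matrix (Fin 4) (Fin 4) ℝ)) a b *
      (eta * (B : Matrix (Fin 4) (Fin 4) ℝ)) c d


/-! Write `X ∈ so(3,1)` as `rot j + boost k` with `j k ∈ ℝ³`: brackets of the generators are
cross products, `B₁ = 2 (k·k' - j·j')` and `B₂ = 4 (j·k' + k·j')`. For an invariant form `B`,
invariance under rotations makes each block of `B` (rotation–rotation, rotation–boost,
boost–boost) an `so(3)`-invariant bilinear form on `ℝ³`, hence a multiple of the dot product;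
invariance under boosts makes the boost–boost multiple the negative of the rotation–rotation one.
The two remaining constants are matched by exactly one combination of `B₁` and `B₂`. -/

lemma trace_lie_mul_add_trace_mul_lie {n R : Type*} [Fintype n] [DecidableEq n] [CommRing R]
    (A B C : Matrix n n R) : trace (⁅A, B⁆ * C) + trace (B * ⁅A, C⁆) = 0 := by
  simp only [Ring.lie_def, Matrix.sub_mul, Matrix.mul_sub, trace_sub, Matrix.mul_assoc]
  rw [trace_mul_comm A (B * C), Matrix.mul_assoc]
  abel

lemma exists_eq_mul_dotProduct_of_cross_invariant {R : Type*} [CommRing R]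
    (β : (Fin 3 → R) →ₗ[R] (Fin 3 → R) →ₗ[R] R)
    (hβ : ∀ a u v, β (a ⨯₃ u) v + β u (a ⨯₃ v) = 0) : ∃ c, ∀ u v, β u v = c * (u ⬝ᵥ v) := by
  obtain ⟨m, hm⟩ : ∃ m : Matrix (Fin 3) (Fin 3) R, ∀ u v, β u v = u ⬝ᵥ (m *ᵥ v) :=
    ⟨LinearMap.toMatrix₂' R β, fun u v => by
      rw [← Matrix.toLinearMap₂'_apply', Matrix.toLinearMap₂'_toMatrix']⟩
  have H : ∀ i j k : Fin 3, (Pi.single i 1 ⨯₃ Pi.single j 1) ⬝ᵥ (m *ᵥ Pi.single k 1) +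
      Pi.single j 1 ⬝ᵥ m *ᵥ (Pi.single i 1 ⨯₃ Pi.single k 1) = 0 := fun i j k => by
    rw [← hm, ← hm]
    exact hβ _ _ _
  obtain ⟨c, hc⟩ : ∃ c : R, m = c • 1 := by
    refine ⟨m 0 0, ?_⟩
    have h₁ := H 2 0 1
    have h₂ := H 1 0 2
    have h₃ := H 0 0 1
    have h₄ := H 0 0 2
    have h₅ := H 1 1 0
    have h₆ := H 1 1 2
    have h₇ := H 2 2 0
    have h₈ := H 2 2 1
    simp [cross_apply, dotProduct, mulVec, Fin.sum_univ_three, Pi.single_apply]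
      at h₁ h₂ h₃ h₄ h₅ h₆ h₇ h₈
    ext i j
    fin_cases i <;> fin_cases j <;> simp <;> grind
  refine ⟨c, fun u v => ?_⟩
  rw [hm, hc, smul_mulVec, one_mulVec, dotProduct_smul, smul_eq_mul]

/-- The permutation matrix of `(a, b, c, d)` carries the Vandermonde matrix of `(0, 1, 2, 3)`,
of determinant `12`, to that of `(a, b, c, d)`. -/
lemma eps_eq (a b c d : Fin 4) :
    eps a b c d = ((b : ℝ) - a) * ((c : ℝ) - a) * ((d : ℝ) - a) * ((c : ℝ) - b) *
      ((d : ℝ) - b) * ((d : ℝ) - c) / 12 := by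
  set v : Fin 4 → Fin 4 := ![a, b, c, d]
  have hV : vandermonde (fun i => ((v i : ℕ) : ℝ)) =
      Matrix.of (fun i j => if v i = j then (1 : ℝ) else 0) *
        vandermonde (fun i : Fin 4 => ((i : ℕ) : ℝ)) := by
    ext i j
    simp [vandermonde_apply, mul_apply]
  have hdet := congrArg det hV
  have hIoi₁ : Finset.Ioi (1 : Fin 4) = {2, 3} := by decide
  have hIoi₂ : Finset.Ioi (2 : Fin 4) = {3} := by decide
  have hIoi₃ : Finset.Ioi (3 : Fin 4) = ∅ := by decide
  rw [det_mul, det_vandermonde, det_vandermonde] at hdet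
  simp [Fin.prod_univ_four, Fin.prod_univ_three, v, hIoi₁, hIoi₂, hIoi₃] at hdet
  norm_num at hdet
  rw [eps]
  linear_combination -hdet / 12

namespace so31

/-- The spatial block is the matrix of `v ↦ u ⨯₃ v`. -/
def rotMatrix (u : Fin 3 → ℝ) : Matrix (Fin 4) (Fin 4) ℝ :=
  !![0, 0, 0, 0; 0, 0, -u 2, u 1; 0, u 2, 0, -u 0; 0, -u 1, u 0, 0]

def boostMatrix (u : Fin 3 → ℝ) : Matrix (Fin 4) (Fin 4) ℝ :=
  !![0, u 0, u 1, u 2; u 0, 0, 0, 0; u 1, 0, 0, 0; u 2, 0, 0, 0]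

lemma mem_iff (A : Matrix (Fin 4) (Fin 4) ℝ) : A ∈ so31 ↔ Aᵀ * eta = eta * -A := by
  rw [so31, mem_skewAdjointMatricesLieSubalgebra, mem_skewAdjointMatricesSubmodule]
  rfl

lemma rotMatrix_mem (u : Fin 3 → ℝ) : rotMatrix u ∈ so31 := by
  rw [mem_iff]
  ext i j
  fin_cases i <;> fin_cases j <;> simp [rotMatrix, eta]

lemma boostMatrix_mem (u : Fin 3 → ℝ) : boostMatrix u ∈ so31 := by
  rw [mem_iff]
  ext i j
  fin_cases i <;> fin_cases j <;> simp [boostMatrix, eta]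

def rot : (Fin 3 → ℝ) →ₗ[ℝ] so31 where
  toFun u := ⟨rotMatrix u, rotMatrix_mem u⟩
  map_add' u v := by ext i j; fin_cases i <;> fin_cases j <;> simp [rotMatrix] <;> ring
  map_smul' c u := by ext i j; fin_cases i <;> fin_cases j <;> simp [rotMatrix]

def boost : (Fin 3 → ℝ) →ₗ[ℝ] so31 where
  toFun u := ⟨boostMatrix u, boostMatrix_mem u⟩
  map_add' u v := by ext i j; fin_cases i <;> fin_cases j <;> simp [boostMatrix]
  map_smul' c u := by ext i j; fin_cases i <;> fin_cases j <;> simp [boostMatrix]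

@[simp] lemma coe_rot (u : Fin 3 → ℝ) :
    (rot u : Matrix (Fin 4) (Fin 4) ℝ) = rotMatrix u := rfl

@[simp] lemma coe_boost (u : Fin 3 → ℝ) :
    (boost u : Matrix (Fin 4) (Fin 4) ℝ) = boostMatrix u := rfl

lemma exists_eq_rot_add_boost (X : so31) : ∃ j k, X = rot j + boost k := by
  obtain ⟨M, hM⟩ := X
  have hskew : ∀ a b, M b a * eta b b = -(eta a a * M a b) := fun a b => by
    simpa [eta, Matrix.mul_diagonal, Matrix.diagonal_mul] using
      congrFun (congrFun ((mem_iff M).1 hM) a) b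
  refine ⟨![M 3 2, M 1 3, M 2 1], ![M 0 1, M 0 2, M 0 3], ?_⟩
  ext i j
  have h₁ := hskew i j
  have h₂ := hskew j i
  fin_cases i <;> fin_cases j <;> simp [rotMatrix, boostMatrix, eta] at h₁ h₂ ⊢ <;> linarith

lemma lie_rot_rot (a b : Fin 3 → ℝ) : ⁅rot a, rot b⁆ = rot (a ⨯₃ b) := by
  ext i j
  simp only [LieSubalgebra.coe_bracket, Ring.lie_def, coe_rot]
  fin_cases i <;> fin_cases j <;> simp [rotMatrix, cross_apply] <;> ring

lemma lie_rot_boost (a b : Fin 3 → ℝ) : ⁅rot a, boost b⁆ = boost (a ⨯₃ b) := by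
  ext i j
  simp only [LieSubalgebra.coe_bracket, Ring.lie_def, coe_rot, coe_boost]
  fin_cases i <;> fin_cases j <;> simp [rotMatrix, boostMatrix, cross_apply] <;> ring

lemma lie_boost_rot (a b : Fin 3 → ℝ) : ⁅boost a, rot b⁆ = boost (a ⨯₃ b) := by
  ext i j
  simp only [LieSubalgebra.coe_bracket, Ring.lie_def, coe_rot, coe_boost]
  fin_cases i <;> fin_cases j <;> simp [rotMatrix, boostMatrix, cross_apply] <;> ring

lemma lie_boost_boost (a b : Fin 3 → ℝ) : ⁅boost a, boost b⁆ = -rot (a ⨯₃ b) := by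
  ext i j
  simp only [LieSubalgebra.coe_bracket, Ring.lie_def, coe_rot, coe_boost,
    NegMemClass.coe_neg]
  fin_cases i <;> fin_cases j <;> simp [rotMatrix, boostMatrix, cross_apply] <;> ring

lemma lie_rot_add_boost (a b c d : Fin 3 → ℝ) :
    ⁅rot a + boost b, rot c + boost d⁆ =
      rot (a ⨯₃ c - b ⨯₃ d) + boost (a ⨯₃ d - c ⨯₃ b) := by
  simp only [add_lie, lie_add, lie_rot_rot, lie_rot_boost, lie_boost_rot,
    lie_boost_boost, map_sub, ← cross_anticomm c b, map_neg]
  abel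

lemma B1_rot_add_boost (j k j' k' : Fin 3 → ℝ) :
    B1 (rot j + boost k) (rot j' + boost k') = 2 * (k ⬝ᵥ k' - j ⬝ᵥ j') := by
  simp [B1, rotMatrix, boostMatrix, trace, Fin.sum_univ_four, dotProduct,
    Fin.sum_univ_three]
  ring

lemma B2_rot_add_boost (j k j' k' : Fin 3 → ℝ) :
    B2 (rot j + boost k) (rot j' + boost k') = 4 * (j ⬝ᵥ k' + k ⬝ᵥ j') := by
  simp only [B2, eps_eq, Fin.sum_univ_four]
  simp [rotMatrix, boostMatrix, eta, dotProduct, Fin.sum_univ_three]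
  ring

end so31

open so31

lemma B1_comm (X Y : so31) : B1 X Y = B1 Y X :=
  trace_mul_comm _ _

lemma B2_comm (X Y : so31) : B2 X Y = B2 Y X := by
  obtain ⟨j, k, rfl⟩ := exists_eq_rot_add_boost X
  obtain ⟨j', k', rfl⟩ := exists_eq_rot_add_boost Y
  rw [B2_rot_add_boost, B2_rot_add_boost, dotProduct_comm j, dotProduct_comm k]
  ring

lemma B1_lie_invariant (X Y Z : so31) : B1 ⁅X, Y⁆ Z + B1 Y ⁅X, Z⁆ = 0 :=
  trace_lie_mul_add_trace_mul_lie (X : Matrix (Fin 4) (Fin 4) ℝ) Y Z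

lemma B2_lie_invariant (X Y Z : so31) : B2 ⁅X, Y⁆ Z + B2 Y ⁅X, Z⁆ = 0 := by
  obtain ⟨a, b, rfl⟩ := exists_eq_rot_add_boost X
  obtain ⟨c, d, rfl⟩ := exists_eq_rot_add_boost Y
  obtain ⟨e, f, rfl⟩ := exists_eq_rot_add_boost Z
  rw [lie_rot_add_boost, lie_rot_add_boost, B2_rot_add_boost, B2_rot_add_boost]
  simp only [dotProduct, Fin.sum_univ_three, cross_apply, Pi.sub_apply, cons_val_zero,
    cons_val_one, cons_val]
  ring

lemma B1_B2_combination_injective {p q : ℝ × ℝ}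
    (h : ∀ X Y, p.1 * B1 X Y + p.2 * B2 X Y = q.1 * B1 X Y + q.2 * B2 X Y) : p = q := by
  have h₁ := h (rot (Pi.single 0 1) + boost 0) (rot (Pi.single 0 1) + boost 0)
  have h₂ := h (rot (Pi.single 0 1) + boost 0) (rot 0 + boost (Pi.single 0 1))
  rw [B1_rot_add_boost, B2_rot_add_boost] at h₁ h₂
  simp at h₁ h₂
  exact Prod.ext h₁ h₂

lemma exists_eq_B1_B2_combination (B : so31 →ₗ[ℝ] so31 →ₗ[ℝ] ℝ)
    (hsym : ∀ X Y, B X Y = B Y X) (hinv : ∀ X Y Z : so31, B ⁅X, Y⁆ Z + B Y ⁅X, Z⁆ = 0) :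
    ∃ p : ℝ × ℝ, ∀ X Y, B X Y = p.1 * B1 X Y + p.2 * B2 X Y := by
  obtain ⟨α, hRR⟩ := exists_eq_mul_dotProduct_of_cross_invariant (B.compl₁₂ rot rot)
    fun a u v => by simpa [lie_rot_rot] using hinv (rot a) (rot u) (rot v)
  obtain ⟨δ, hRB⟩ := exists_eq_mul_dotProduct_of_cross_invariant (B.compl₁₂ rot boost)
    fun a u v => by simpa [lie_rot_rot, lie_rot_boost] using hinv (rot a) (rot u) (boost v)
  obtain ⟨γ, hBB⟩ := exists_eq_mul_dotProduct_of_cross_invariant (B.compl₁₂ boost boost)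
    fun a u v => by simpa [lie_rot_boost] using hinv (rot a) (boost u) (boost v)
  simp only [LinearMap.compl₁₂_apply] at hRR hRB hBB
  have hγ : γ = -α := by
    have h := hinv (boost (Pi.single 2 1)) (rot (Pi.single 0 1)) (boost (Pi.single 1 1))
    rw [lie_boost_rot, lie_boost_boost, map_neg, hBB, hRR] at h
    simp [cross_apply, dotProduct, Fin.sum_univ_three] at h
    linarith
  refine ⟨(-α / 2, δ / 4), fun X Y => ?_⟩
  obtain ⟨j, k, rfl⟩ := exists_eq_rot_add_boost X
  obtain ⟨j', k', rfl⟩ := exists_eq_rot_add_boost Y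
  simp only [B1_rot_add_boost, B2_rot_add_boost, map_add, LinearMap.add_apply]
  rw [hsym (boost k), hRR, hRB, hRB, hBB, hγ, dotProduct_comm j' k]
  ring

/-- the real vector space of ad-invariant symmetric bilinear forms on
`so(3,1)` (those with `B([X,Y],Z) + B(Y,[X,Z]) = 0`) is two-dimensional, spanned by
`B₁(A,B) = tr(AB)` and `B₂(A,B) = Σ ε^{abcd} (ηA)_{ab} (ηB)_{cd}`: the forms `B₁`
and `B₂` are themselves symmetric and ad-invariant, and every ad-invariant symmetric
bilinear form is a unique linear combination of them. -/
theorem invariant_symmetric_bilinear_forms_two_dimensional :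
    (∀ X Y : so31, B1 X Y = B1 Y X) ∧
    (∀ X Y : so31, B2 X Y = B2 Y X) ∧
    (∀ X Y Z : so31, B1 ⁅X, Y⁆ Z + B1 Y ⁅X, Z⁆ = 0) ∧
    (∀ X Y Z : so31, B2 ⁅X, Y⁆ Z + B2 Y ⁅X, Z⁆ = 0) ∧
    (∀ B : so31 →ₗ[ℝ] so31 →ₗ[ℝ] ℝ,
      (∀ X Y : so31, B X Y = B Y X) →
      (∀ X Y Z : so31, B ⁅X, Y⁆ Z + B Y ⁅X, Z⁆ = 0) →
      ∃! p : ℝ × ℝ, ∀ X Y : so31, B X Y = p.1 * B1 X Y + p.2 * B2 X Y) := by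
  refine ⟨B1_comm, B2_comm, B1_lie_invariant, B2_lie_invariant, fun B hsym hinv => ?_⟩
  obtain ⟨p, hp⟩ := exists_eq_B1_B2_combination B hsym hinv
  exact ⟨p, hp, fun q hq => B1_B2_combination_injective fun X Y => (hq X Y).symm.trans (hp X Y)⟩
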